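/- Let G = ⟨σ⟩ be a finite cyclic group of order n, and consider the Cayley graph Cay(G, {σ}) with vertex set G and edges g → gσ. Then Fl(G, {σ}) ≅ ℤ with trivial G-action. More generally, for any S ⊆ G containing σ (with σ a generator), Fl(Cay(G, S)) ≅ ℤ ⊕ (ℤG)^{|S|-1} as G-lattices; in particular Fl(Cay(G, S)) is a permutation G-lattice. -/

import Mathlib

structure DiGraph (V E : Type*) where
  src : E → V
  tgt : E → V

noncomputable def DiGraph.boundary {V E : Type*} [Fintype E] [DecidableEq V]
    (X : DiGraph V E) : (E → ℤ) →ₗ[ℤ] (V → ℤ) where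
  toFun f := fun v =>
    ∑ e, f e * ((if X.tgt e = v then 1 else 0) - (if X.src e = v then 1 else 0))
  map_add' f g := by
    funext v
    simp [add_mul, Finset.sum_add_distrib]
  map_smul' c f := by
    funext v
    simp [Finset.mul_sum, mul_assoc]

/-- The multiplicative group structure on `AddAut A` of the older Mathlib (composition). -/
instance AddAut.instGroupOfComp {A : Type*} [Add A] : Group (AddAut A) where
  mul g h := AddEquiv.trans h g
  one := AddEquiv.refl _
  inv := AddEquiv.symm
  mul_assoc _ _ _ := rfl
  one_mul _ := rfl
  mul_one _ := rfl
  inv_mul_cancel := AddEquiv.self_trans_symm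

@[simp]
theorem AddAut.mul_apply_ofComp {A : Type*} [Add A] (e₁ e₂ : AddAut A) (m : A) :
    (e₁ * e₂) m = e₁ (e₂ m) := rfl

@[simp]
theorem AddAut.one_apply_ofComp {A : Type*} [Add A] (m : A) : (1 : AddAut A) m = m := rfl

/-- The shift of a function on edges by a permutation: `(π • f) e = f (π⁻¹ e)`. -/
def eshift {E : Type*} (π : Equiv.Perm E) (f : E → ℤ) : E → ℤ := fun e => f (π⁻¹ e)

theorem eshift_flow_mem {V E : Type*} [Fintype E] [DecidableEq V] (X : DiGraph V E)
    {G : Type*} [Group G] (actV : G →* Equiv.Perm V) (actE : G →* Equiv.Perm E)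
    (hsrc : ∀ g e, X.src (actE g e) = actV g (X.src e))
    (htgt : ∀ g e, X.tgt (actE g e) = actV g (X.tgt e))
    (g : G) {f : E → ℤ} (hf : f ∈ LinearMap.ker X.boundary) :
    eshift (actE g) f ∈ LinearMap.ker X.boundary := by
  rw [LinearMap.mem_ker] at hf ⊢
  funext v
  have h0 : X.boundary f ((actV g)⁻¹ v) = 0 := by rw [hf]; rfl
  simp only [DiGraph.boundary, LinearMap.coe_mk, AddHom.coe_mk, eshift, Pi.zero_apply] at h0 ⊢
  rw [← Equiv.sum_comp (actE g) (fun e => f ((actE g)⁻¹ e) *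
      ((if X.tgt e = v then 1 else 0) - (if X.src e = v then 1 else 0)))]
  refine Eq.trans (Finset.sum_congr rfl ?_) h0
  intro e _
  simp only [show ∀ x, (actE g)⁻¹ (actE g x) = x from fun x => (actE g).symm_apply_apply x, htgt, hsrc]
  congr 2
  · by_cases h : X.tgt e = (actV g)⁻¹ v
    · simp [h]
    · have h2 : actV g (X.tgt e) ≠ v := fun hc => h (by rw [← hc]; simp)
      simp [h, h2]; exact h
  · by_cases h : X.src e = (actV g)⁻¹ v
    · simp [h]
    · have h2 : actV g (X.src e) ≠ v := fun hc => h (by rw [← hc]; simp)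
      simp [h, h2]; exact h

/-- The `G`-lattice structure on the flow lattice induced by a graph action. -/
noncomputable def flowRep {V E : Type*} [Fintype E] [DecidableEq V] (X : DiGraph V E)
    {G : Type*} [Group G] (actV : G →* Equiv.Perm V) (actE : G →* Equiv.Perm E)
    (hsrc : ∀ g e, X.src (actE g e) = actV g (X.src e))
    (htgt : ∀ g e, X.tgt (actE g e) = actV g (X.tgt e)) :
    G →* AddAut ↥(LinearMap.ker X.boundary) where
  toFun g :=
    { toFun := fun f => ⟨eshift (actE g) f, eshift_flow_mem X actV actE hsrc htgt g f.2⟩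
      invFun := fun f => ⟨eshift (actE g⁻¹) f, eshift_flow_mem X actV actE hsrc htgt g⁻¹ f.2⟩
      left_inv := by
        intro f; ext e
        simp [eshift]
      right_inv := by
        intro f; ext e
        simp [eshift]
      map_add' := by
        intro a b; ext e
        simp [eshift] }
  map_one' := by
    ext f e
    simp [eshift]
  map_mul' := by
    intro g h
    ext f e
    simp [eshift, mul_inv_rev]




/-- The directed Cayley graph of `G` with respect to `S`: an edge `g → g·s`
for every `g ∈ G`, `s ∈ S`. -/
def cayley (G : Type*) [Group G] (S : Finset G) : DiGraph G (G × ↥S) where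
  src p := p.1
  tgt p := p.1 * ↑p.2

/-- Left multiplication action of `G` on the edges `G × T` of a Cayley-type graph. -/
def cayAct (G : Type*) [Group G] (T : Type*) : G →* Equiv.Perm (G × T) where
  toFun g := Equiv.prodCongr (Equiv.mulLeft g) (Equiv.refl T)
  map_one' := by ext p <;> simp
  map_mul' := by intro g h; ext p <;> simp [mul_assoc]

theorem cayley_src_equivariant (G : Type*) [Group G] (S : Finset G) (g : G) (e : G × ↥S) :
    (cayley G S).src (cayAct G ↥S g e) = MulAction.toPermHom G G g ((cayley G S).src e) := rfl

theorem cayley_tgt_equivariant (G : Type*) [Group G] (S : Finset G) (g : G) (e : G × ↥S) :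
    (cayley G S).tgt (cayAct G ↥S g e) = MulAction.toPermHom G G g ((cayley G S).tgt e) := by
  show (g * e.1) * ↑e.2 = g * (e.1 * ↑e.2)
  rw [mul_assoc]

/-- The permutation action of `G` on `ι → ℤ` induced by an action on `ι`. -/
def permAut {G ι : Type*} [Group G] (act : G →* Equiv.Perm ι) : G →* AddAut (ι → ℤ) where
  toFun g :=
    { toEquiv := Equiv.arrowCongr (act g) (Equiv.refl ℤ)
      map_add' := fun _ _ => rfl }
  map_one' := by ext f i; simp [AddEquiv.coe_mk, Equiv.arrowCongr_apply]; rfl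
  map_mul' := by
    intro g h; ext f i
    simp only [map_mul]; rfl

/-- `ρ` is a permutation representation. -/
def IsPermutationRep {G M : Type*} [Group G] [AddCommGroup M] (ρ : G →* AddAut M) : Prop :=
  ∃ (ι : Type) (_ : Fintype ι) (act : G →* Equiv.Perm ι) (e : M ≃+ (ι → ℤ)),
    ∀ (g : G) (m : M), e (ρ g m) = permAut act g (e m)

/-! The `σ`-edges of `Cay(G, S)` form one Hamiltonian cycle `Z`, since `σ` generates `G`.
Closing any other edge `e = (x, t)` by the `σ`-path from `x t` back to `x` gives a cycle `C e`
which meets the non-`σ` edges only in `e`, and `g • C e = C (g e)`. For a flow `f`, the flow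
`f - ∑ f e • C e` vanishes off the `σ`-edges, and conservation along `Z` makes it constant on them,
so it is a multiple of `Z`. Hence `(a, b) ↦ a • Z + ∑ b e • C e` is a `G`-equivariant isomorphism
from `ℤ × ℤ[G × (S \ {σ})]`, with `G` acting trivially on `ℤ`, onto the flow lattice. -/

open Finset

theorem DiGraph.boundary_single {V E : Type*} [Fintype E] [DecidableEq V] [DecidableEq E]
    (X : DiGraph V E) (e : E) :
    X.boundary (Pi.single e 1) = Pi.single (X.tgt e) 1 - Pi.single (X.src e) 1 := by
  funext v
  simp [DiGraph.boundary, Pi.single_apply, eq_comm]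

theorem eshift_eq_funLeft {E : Type*} (π : Equiv.Perm E) (f : E → ℤ) :
    eshift π f = LinearMap.funLeft ℤ ℤ ⇑π⁻¹ f := rfl

theorem eshift_cayAct_apply {G : Type*} [Group G] {S : Finset G} (g : G) (f : G × S → ℤ)
    (e : G × S) : eshift (cayAct G S g) f e = f (g⁻¹ * e.1, e.2) := rfl

section Cycles

variable {G : Type*} [Group G] [DecidableEq G] {S : Finset G}

theorem eshift_cayAct_single (g : G) (e : G × S) :
    eshift (cayAct G S g) (Pi.single e 1) = Pi.single (g * e.1, e.2) 1 := by
  funext y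
  simp only [eshift_cayAct_apply, Pi.single_apply, Prod.ext_iff, inv_mul_eq_iff_eq_mul]

variable (σ : S)

def sigmaCycle : G × S → ℤ := fun e => if e.2 = σ then 1 else 0

def sigmaPath (x : G) (n : ℕ) : G × S → ℤ :=
  ∑ j ∈ range n, Pi.single (x * (σ : G) ^ j, σ) 1

theorem sigmaPath_apply_of_ne (x : G) (n : ℕ) {y : G × S} (hy : y.2 ≠ σ) :
    sigmaPath σ x n y = 0 := by
  simp [sigmaPath, Finset.sum_apply, Prod.ext_iff, hy.symm]

/-- Given `σ ^ k t = t⁻¹`, the `σ`-path from `x t` of length `k t` ends at `x`, so it closes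
the edge `(x, t)` to a cycle. -/
def fundCycle (k : S → ℕ) (e : G × S) : G × S → ℤ :=
  Pi.single e 1 + sigmaPath σ (e.1 * e.2) (k e.2)

variable {σ} {k : S → ℕ}

theorem fundCycle_apply_of_ne (e : G × S) {y : G × S} (hy : y.2 ≠ σ) :
    fundCycle σ k e y = (Pi.single e 1 : G × S → ℤ) y := by
  simp [fundCycle, sigmaPath_apply_of_ne σ _ _ hy]

theorem eshift_sigmaCycle (g : G) : eshift (cayAct G S g) (sigmaCycle σ) = sigmaCycle σ := rfl

theorem eshift_fundCycle (g : G) (e : G × S) :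
    eshift (cayAct G S g) (fundCycle σ k e) = fundCycle σ k (g * e.1, e.2) := by
  simp only [fundCycle, sigmaPath, eshift_eq_funLeft, map_add, map_sum]
  simp only [← eshift_eq_funLeft, eshift_cayAct_single, mul_assoc]

variable [Fintype G]

theorem cayley_boundary_apply (f : G × S → ℤ) (v : G) :
    (cayley G S).boundary f v = ∑ s : S, f (v * (s : G)⁻¹, s) - ∑ s : S, f (v, s) := by
  show ∑ e : G × S, f e * ((if e.1 * e.2 = v then 1 else 0) - (if e.1 = v then 1 else 0)) = _
  simp [mul_sub, Finset.sum_sub_distrib, Fintype.sum_prod_type_right, ← eq_mul_inv_iff_mul_eq]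

variable (σ) in
theorem sigmaCycle_mem_flows : sigmaCycle σ ∈ LinearMap.ker (cayley G S).boundary := by
  rw [LinearMap.mem_ker]
  funext v
  simp [cayley_boundary_apply, sigmaCycle]

theorem boundary_sigmaPath (x : G) (n : ℕ) :
    (cayley G S).boundary (sigmaPath σ x n) = Pi.single (x * (σ : G) ^ n) 1 - Pi.single x 1 := by
  have htgt (j : ℕ) : (cayley G S).tgt (x * (σ : G) ^ j, σ) = x * (σ : G) ^ (j + 1) := by
    rw [pow_succ, ← mul_assoc]; rfl
  simp only [sigmaPath, map_sum, DiGraph.boundary_single, htgt]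
  exact (Finset.sum_range_sub (fun j => (Pi.single (x * (σ : G) ^ j) 1 : G → ℤ)) n).trans
    (by rw [pow_zero, mul_one])

theorem fundCycle_mem_flows (hk : ∀ t : S, (σ : G) ^ k t = (t : G)⁻¹) (e : G × S) :
    fundCycle σ k e ∈ LinearMap.ker (cayley G S).boundary := by
  rw [LinearMap.mem_ker, fundCycle, map_add, DiGraph.boundary_single, boundary_sigmaPath, mul_assoc,
    hk, mul_inv_cancel, mul_one]
  exact add_eq_zero_iff_eq_neg.mpr (neg_sub _ _).symm

theorem eq_smul_sigmaCycle (hpow : ∀ x : G, ∃ m : ℕ, (σ : G) ^ m = x) {f : G × S → ℤ}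
    (hf : f ∈ LinearMap.ker (cayley G S).boundary) (hoff : ∀ y : G × S, y.2 ≠ σ → f y = 0) :
    f = f (1, σ) • sigmaCycle σ := by
  have hstep (x : G) : f (x * σ, σ) = f (x, σ) := by
    have h := congrFun (LinearMap.mem_ker.mp hf) (x * σ)
    rw [cayley_boundary_apply, Fintype.sum_eq_single σ, Fintype.sum_eq_single σ] at h
    · simp only [mul_inv_cancel_right, Pi.zero_apply] at h
      linarith
    all_goals exact fun t ht => hoff _ ht
  have hconst (m : ℕ) : f ((σ : G) ^ m, σ) = f (1, σ) := by
    induction m with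
    | zero => rw [pow_zero]
    | succ m ih => rw [pow_succ, hstep, ih]
  funext ⟨x, t⟩
  obtain ⟨m, rfl⟩ := hpow x
  by_cases ht : t = σ
  · subst ht; simp [sigmaCycle, hconst]
  · simp [sigmaCycle, ht, hoff (_, t) ht]

end Cycles

section Coords

variable {G : Type*} [Group G] [Fintype G] [DecidableEq G] {S : Finset G} {σ : S} {k : S → ℕ}

variable (σ k) in
def flowOfCoords : ℤ × ({t : S // t ≠ σ} → G → ℤ) →ₗ[ℤ] (G × S → ℤ) where
  toFun p := p.1 • sigmaCycle σ + ∑ t, ∑ x, p.2 t x • fundCycle σ k (x, t)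
  map_add' p q := by
    simp only [Prod.fst_add, Prod.snd_add, Pi.add_apply, add_smul, sum_add_distrib]
    abel
  map_smul' c p := by
    simp only [Prod.smul_fst, Prod.smul_snd, Pi.smul_apply, smul_eq_mul, mul_smul, smul_add,
      smul_sum, RingHom.id_apply]

theorem flowOfCoords_apply (p : ℤ × ({t : S // t ≠ σ} → G → ℤ)) :
    flowOfCoords σ k p = p.1 • sigmaCycle σ + ∑ t, ∑ x, p.2 t x • fundCycle σ k (x, t) := rfl

theorem flowOfCoords_mem_flows (hk : ∀ t : S, (σ : G) ^ k t = (t : G)⁻¹)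
    (p : ℤ × ({t : S // t ≠ σ} → G → ℤ)) :
    flowOfCoords σ k p ∈ LinearMap.ker (cayley G S).boundary :=
  add_mem (Submodule.smul_mem _ _ (sigmaCycle_mem_flows σ))
    (sum_mem fun _ _ => sum_mem fun _ _ => Submodule.smul_mem _ _ (fundCycle_mem_flows hk _))

theorem flowOfCoords_apply_of_ne (p : ℤ × ({t : S // t ≠ σ} → G → ℤ)) {y : G × S}
    (hy : y.2 ≠ σ) : flowOfCoords σ k p y = p.2 ⟨y.2, hy⟩ y.1 := by
  simp only [flowOfCoords_apply, zsmul_eq_mul, Pi.add_apply, Pi.mul_apply, Pi.intCast_apply,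
    Int.cast_eq, sigmaCycle, hy, ↓reduceIte, mul_zero, Finset.sum_apply,
    fundCycle_apply_of_ne _ hy, Pi.single_apply, mul_ite, mul_one, zero_add]
  rw [Fintype.sum_eq_single ⟨y.2, hy⟩ fun t ht =>
    sum_eq_zero fun x _ => if_neg fun h => ht (Subtype.ext (congrArg Prod.snd h).symm)]
  simp [Prod.ext_iff]

theorem eshift_flowOfCoords (g : G) (p : ℤ × ({t : S // t ≠ σ} → G → ℤ)) :
    eshift (cayAct G S g) (flowOfCoords σ k p)
      = flowOfCoords σ k (p.1, fun t x => p.2 t (g⁻¹ * x)) := by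
  simp only [flowOfCoords_apply, eshift_eq_funLeft, map_add, map_smul, map_sum]
  simp only [← eshift_eq_funLeft, eshift_fundCycle, eshift_sigmaCycle]
  congr 1
  refine sum_congr rfl fun t _ => ?_
  exact Fintype.sum_equiv (Equiv.mulLeft g) _ _ (fun x => by simp)

theorem flowOfCoords_injective : Function.Injective (flowOfCoords σ k) := by
  refine (injective_iff_map_eq_zero _).mpr fun p hp => ?_
  have h2 : p.2 = 0 := funext fun t => funext fun x =>
    (flowOfCoords_apply_of_ne p (y := (x, t)) t.2).symm.trans (congrFun hp (x, t))
  have h1 : p.1 = 0 := by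
    simpa [flowOfCoords_apply, h2, sigmaCycle] using congrFun hp (1, σ)
  exact Prod.ext h1 h2

theorem exists_flowOfCoords_eq (hpow : ∀ x : G, ∃ m : ℕ, (σ : G) ^ m = x)
    (hk : ∀ t : S, (σ : G) ^ k t = (t : G)⁻¹) {f : G × S → ℤ}
    (hf : f ∈ LinearMap.ker (cayley G S).boundary) : ∃ p, flowOfCoords σ k p = f := by
  set b : {t : S // t ≠ σ} → G → ℤ := fun t x => f (x, t)
  set r := f - flowOfCoords σ k (0, b)
  have hr : r ∈ LinearMap.ker (cayley G S).boundary := sub_mem hf (flowOfCoords_mem_flows hk _)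
  have hr_off (y : G × S) (hy : y.2 ≠ σ) : r y = 0 := by
    simp [r, b, flowOfCoords_apply_of_ne _ hy]
  refine ⟨(r (1, σ), b), ?_⟩
  calc flowOfCoords σ k (r (1, σ), b)
      = r (1, σ) • sigmaCycle σ + flowOfCoords σ k (0, b) := by simp [flowOfCoords_apply]
    _ = r + flowOfCoords σ k (0, b) := by rw [← eq_smul_sigmaCycle hpow hr hr_off]
    _ = f := sub_add_cancel _ _

noncomputable def flowCoordsEquiv (hpow : ∀ x : G, ∃ m : ℕ, (σ : G) ^ m = x)
    (hk : ∀ t : S, (σ : G) ^ k t = (t : G)⁻¹) :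
    (ℤ × ({t : S // t ≠ σ} → G → ℤ)) ≃ₗ[ℤ] LinearMap.ker (cayley G S).boundary :=
  LinearEquiv.ofBijective ((flowOfCoords σ k).codRestrict _ (flowOfCoords_mem_flows hk))
    ⟨fun _ _ h => flowOfCoords_injective (congrArg Subtype.val h),
      fun f => (exists_flowOfCoords_eq hpow hk f.2).imp fun _ hp => Subtype.ext hp⟩

theorem flowCoordsEquiv_symm_flowRep (hpow : ∀ x : G, ∃ m : ℕ, (σ : G) ^ m = x)
    (hk : ∀ t : S, (σ : G) ^ k t = (t : G)⁻¹) (g : G) (f : LinearMap.ker (cayley G S).boundary) :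
    (flowCoordsEquiv hpow hk).symm (flowRep (cayley G S) (MulAction.toPermHom G G) (cayAct G S)
        (cayley_src_equivariant G S) (cayley_tgt_equivariant G S) g f)
      = (((flowCoordsEquiv hpow hk).symm f).1,
          fun t x => ((flowCoordsEquiv hpow hk).symm f).2 t (g⁻¹ * x)) := by
  rw [LinearEquiv.symm_apply_eq]
  apply Subtype.ext
  have hf : (f : G × S → ℤ) = flowOfCoords σ k ((flowCoordsEquiv hpow hk).symm f) :=
    congrArg Subtype.val ((flowCoordsEquiv hpow hk).apply_symm_apply f).symm
  show eshift (cayAct G S g) f = _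
  rw [hf, eshift_flowOfCoords]
  rfl

end Coords

theorem exists_cayley_flow_addEquiv_prod {G : Type*} [Group G] [Fintype G] [DecidableEq G]
    {σ : G} (hgen : ∀ x : G, x ∈ Subgroup.zpowers σ) (S : Finset G) (hσS : σ ∈ S) :
    ∃ φ : LinearMap.ker (cayley G S).boundary ≃+ ℤ × (Fin (S.card - 1) → G → ℤ),
      ∀ (g : G) (f : LinearMap.ker (cayley G S).boundary),
        (φ (flowRep (cayley G S) (MulAction.toPermHom G G) (cayAct G S)
            (cayley_src_equivariant G S) (cayley_tgt_equivariant G S) g f)).1 = (φ f).1 ∧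
        (φ (flowRep (cayley G S) (MulAction.toPermHom G G) (cayAct G S)
            (cayley_src_equivariant G S) (cayley_tgt_equivariant G S) g f)).2
          = fun i x => (φ f).2 i (g⁻¹ * x) := by
  have hpow (x : G) : ∃ m : ℕ, ((⟨σ, hσS⟩ : S) : G) ^ m = x :=
    mem_powers_iff_mem_zpowers.mpr (hgen x)
  choose k hk using fun t : S => hpow (t : G)⁻¹
  have hcard : Fintype.card {t : S // t ≠ ⟨σ, hσS⟩} = S.card - 1 := by simp
  let φ := (flowCoordsEquiv hpow hk).symm.trans (LinearEquiv.prodCongr (LinearEquiv.refl ℤ ℤ)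
    (LinearEquiv.funCongrLeft ℤ (G → ℤ) (Fintype.equivFinOfCardEq hcard).symm))
  refine ⟨φ.toAddEquiv, fun g f => ?_⟩
  show (φ _).1 = (φ f).1 ∧ (φ _).2 = fun i x => (φ f).2 i (g⁻¹ * x)
  rw [LinearEquiv.trans_apply, flowCoordsEquiv_symm_flowRep]
  exact ⟨rfl, rfl⟩

theorem permAut_apply {G ι : Type*} [Group G] (act : G →* Equiv.Perm ι) (g : G) (F : ι → ℤ)
    (i : ι) : permAut act g F i = F ((act g)⁻¹ i) := rfl

theorem IsPermutationRep.of_addEquiv {G M X : Type*} [Group G] [AddCommGroup M] [Fintype X]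
    {ρ : G →* AddAut M} (act : G →* Equiv.Perm X) (e : M ≃+ (X → ℤ))
    (he : ∀ g m, e (ρ g m) = permAut act g (e m)) : IsPermutationRep ρ := by
  let ν := Fintype.equivFin X
  refine ⟨Fin (Fintype.card X), inferInstance, ν.permCongrHom.toMonoidHom.comp act,
    e.trans (LinearEquiv.funCongrLeft ℤ ℤ ν.symm).toAddEquiv, fun g m => ?_⟩
  funext i
  simp [he, permAut_apply, Equiv.permCongr_def]

theorem IsPermutationRep.of_addEquiv_prod {G M N : Type*} [Group G] [Fintype G] [AddCommGroup M]
    [Fintype N] {ρ : G →* AddAut M} (φ : M ≃+ ℤ × (N → G → ℤ))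
    (hφ : ∀ g m, (φ (ρ g m)).1 = (φ m).1 ∧ (φ (ρ g m)).2 = fun i x => (φ m).2 i (g⁻¹ * x)) :
    IsPermutationRep ρ := by
  let pack : ℤ × (N → G → ℤ) ≃+ (Unit ⊕ G × N → ℤ) :=
    { toFun := fun p => Sum.elim (fun _ => p.1) (fun q => p.2 q.2 q.1)
      invFun := fun F => (F (.inl ()), fun i x => F (.inr (x, i)))
      left_inv := fun _ => rfl
      right_inv := fun F => funext fun i => by cases i <;> rfl
      map_add' := fun _ _ => funext fun i => by cases i <;> rfl }
  refine .of_addEquiv ((Equiv.Perm.sumCongrHom _ _).comp ((1 : G →* _).prod (cayAct G N)))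
    (φ.trans pack) fun g m => ?_
  funext j
  rcases j with _ | ⟨x, i⟩
  · exact (hφ g m).1
  · exact congrFun (congrFun (hφ g m).2 i) x

/-- For a finite cyclic group `G = ⟨σ⟩`:
the flow lattice of `Cay(G, {σ})` is `ℤ` with the trivial `G`-action; and for any
`S ⊆ G` containing `σ`, `Fl(Cay(G, S)) ≅ ℤ ⊕ (ℤG)^{|S|-1}` as `G`-lattices — in
particular the flow lattice of `Cay(G, S)` is a permutation `G`-lattice. -/
theorem flow_lattice_of_cyclic_cayley {G : Type*} [Group G] [Fintype G] [DecidableEq G]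
    (σ : G) (hgen : ∀ x : G, x ∈ Subgroup.zpowers σ)
    (S : Finset G) (hσS : σ ∈ S) :
    (∃ ψ : ↥(LinearMap.ker (cayley G {σ}).boundary) ≃+ ℤ,
      ∀ (g : G) (f : ↥(LinearMap.ker (cayley G {σ}).boundary)),
        ψ (flowRep (cayley G {σ}) (MulAction.toPermHom G G) (cayAct G ↥({σ} : Finset G))
            (cayley_src_equivariant G {σ}) (cayley_tgt_equivariant G {σ}) g f) = ψ f) ∧
    (∃ φ : ↥(LinearMap.ker (cayley G S).boundary) ≃+
        ℤ × (Fin (S.card - 1) → (G → ℤ)),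
      ∀ (g : G) (f : ↥(LinearMap.ker (cayley G S).boundary)),
        ((φ (flowRep (cayley G S) (MulAction.toPermHom G G) (cayAct G ↥S)
            (cayley_src_equivariant G S) (cayley_tgt_equivariant G S) g f)).1 = (φ f).1) ∧
        ((φ (flowRep (cayley G S) (MulAction.toPermHom G G) (cayAct G ↥S)
            (cayley_src_equivariant G S) (cayley_tgt_equivariant G S) g f)).2
          = fun i x => (φ f).2 i (g⁻¹ * x))) ∧
    IsPermutationRep (flowRep (cayley G S) (MulAction.toPermHom G G) (cayAct G ↥S)
        (cayley_src_equivariant G S) (cayley_tgt_equivariant G S)) := by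
  obtain ⟨φ₁, hφ₁⟩ := exists_cayley_flow_addEquiv_prod hgen {σ} (Finset.mem_singleton_self σ)
  obtain ⟨φ, hφ⟩ := exists_cayley_flow_addEquiv_prod hgen S hσS
  have : IsEmpty (Fin (({σ} : Finset G).card - 1)) := by
    rw [Finset.card_singleton, Nat.sub_self]
    infer_instance
  exact ⟨⟨φ₁.trans (AddEquiv.prodUnique ..), fun g f => (hφ₁ g f).1⟩, ⟨φ, hφ⟩,
    .of_addEquiv_prod φ hφ⟩
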